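/- Let N ∈ ℕ, Q_1,…,Q_N, E_1,…,E_{N−1} > 0, and S the piecewise-linear path encoding (slope −1 on the intervals O_n = [a_n, b_n], slope +1 otherwise, S(0)=0, a_1 = 0). Define c_n := min{ b_n + M(b_n) − S(b_n), a_{n+1} } for 1 ≤ n ≤ N (with a_{N+1} = ∞), where M(x) = sup_{y ≤ x} S(y). Then the Pitman transform TS(x) = 2M(x) − S(x) − 2M(0) is piecewise linear with slope ±1, decreasing exactly on the intervals [b_n, c_n] for 1 ≤ n ≤ N, and increasing elsewhere. -/

import Mathlib

noncomputable def aPt (Q E : ℕ → ℝ) (n : ℕ) : ℝ :=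
  ∑ k ∈ Finset.Icc 1 (n - 1), (Q k + E k)

noncomputable def bPt (Q E : ℕ → ℝ) (n : ℕ) : ℝ := aPt Q E n + Q n

def ballSet (N : ℕ) (Q E : ℕ → ℝ) : Set ℝ :=
  ⋃ n ∈ Finset.Icc 1 N, Set.Icc (aPt Q E n) (bPt Q E n)

noncomputable def pathEnc (N : ℕ) (Q E : ℕ → ℝ) (x : ℝ) : ℝ :=
  ∫ y in (0:ℝ)..x, (1 - 2 * Set.indicator (ballSet N Q E) (fun _ => (1:ℝ)) y)

noncomputable def pastMax (S : ℝ → ℝ) (x : ℝ) : ℝ := sSup (S '' Set.Iic x)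

noncomputable def pitman (S : ℝ → ℝ) (x : ℝ) : ℝ :=
  2 * pastMax S x - S x - 2 * pastMax S 0

/-- `c_n = min (b_n + M(b_n) - S(b_n)) (a_{n+1})`, with `a_{N+1} = ∞`. -/
noncomputable def cPt (N : ℕ) (Q E : ℕ → ℝ) (n : ℕ) : ℝ :=
  if n < N then
    min (bPt Q E n + pastMax (pathEnc N Q E) (bPt Q E n) - pathEnc N Q E (bPt Q E n))
      (aPt Q E (n + 1))
  else bPt Q E n + pastMax (pathEnc N Q E) (bPt Q E n) - pathEnc N Q E (bPt Q E n)

/-!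
The Pitman transform of `S` is itself a path encoding, namely of `⋃ₙ [bₙ, cₙ]`. Both functions
equal the identity on `(-∞, 0]`, and on each cell `[aₙ, aₙ₊₁]` they have the same slopes: on
`[aₙ, bₙ]` the path `S` falls, so `M` is constant and `TS` rises; on `[bₙ, cₙ]` the path rises but
stays below `M(bₙ)`, so `M` is still constant and `TS` falls; from `cₙ` on, `S` is at its running
maximum, so `M = S` and `TS` rises. Induction over the cells gives the identity, from which both
claims are read off.
-/

open MeasureTheory Set

-- `pathEnc N Q E` is `pathEncOf (ballSet N Q E)` by definition.
noncomputable def pathEncOf (B : Set ℝ) (x : ℝ) : ℝ :=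
  ∫ y in (0:ℝ)..x, (1 - 2 * B.indicator (fun _ => (1:ℝ)) y)

section PathEncOf

variable {B : Set ℝ}

@[simp]
lemma pathEncOf_zero (B : Set ℝ) : pathEncOf B 0 = 0 := by simp [pathEncOf]

lemma pathEncOf_sub (hB : MeasurableSet B) {x y : ℝ} (hxy : x ≤ y) :
    pathEncOf B y - pathEncOf B x = y - x - 2 * volume.real (B ∩ Ioc x y) := by
  have hind : ∀ u v : ℝ, IntervalIntegrable (B.indicator fun _ => (1:ℝ)) volume u v :=
    fun u v => intervalIntegrable_iff.2 <|
      (integrableOn_const measure_Ioc_lt_top.ne).indicator hB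
  have hint : ∀ u v : ℝ, IntervalIntegrable
      (fun t => 1 - 2 * B.indicator (fun _ => (1:ℝ)) t) volume u v :=
    fun u v => intervalIntegrable_const.sub ((hind u v).const_mul 2)
  rw [pathEncOf, pathEncOf, intervalIntegral.integral_interval_sub_left (hint 0 y) (hint 0 x),
    intervalIntegral.integral_sub intervalIntegrable_const ((hind x y).const_mul 2),
    intervalIntegral.integral_const_mul, intervalIntegral.integral_of_le hxy,
    intervalIntegral.integral_of_le hxy, integral_indicator_const _ hB]
  simp [Measure.real, Measure.restrict_apply hB, inter_comm, hxy]

lemma pathEncOf_sub_le (hB : MeasurableSet B) {x y : ℝ} (hxy : x ≤ y) :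
    pathEncOf B y - pathEncOf B x ≤ y - x := by
  rw [pathEncOf_sub hB hxy]
  linarith [measureReal_nonneg (μ := volume) (s := B ∩ Ioc x y)]

lemma pathEncOf_sub_of_subset (hB : MeasurableSet B) {x y : ℝ} (hxy : x ≤ y)
    (h : Ioo x y ⊆ B) : pathEncOf B y - pathEncOf B x = x - y := by
  have hvol : volume (B ∩ Ioc x y) = volume (Ioc x y) :=
    le_antisymm (measure_mono inter_subset_right) <| by
      rw [← Ioo_ae_eq_Ioc.measure_eq]
      exact measure_mono fun t ht => ⟨h ht, ht.1, ht.2.le⟩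
  rw [pathEncOf_sub hB hxy, Measure.real, hvol, Real.volume_Ioc,
    ENNReal.toReal_ofReal (sub_nonneg.2 hxy)]
  ring

lemma pathEncOf_sub_of_null (hB : MeasurableSet B) {x y : ℝ} (hxy : x ≤ y)
    (h : volume (B ∩ Ioo x y) = 0) : pathEncOf B y - pathEncOf B x = y - x := by
  have hvol : volume (B ∩ Ioc x y) = 0 :=
    measure_mono_null (fun t ⟨htB, htx, hty⟩ => hty.lt_or_eq.imp (fun h => ⟨htB, htx, h⟩) id)
      (measure_union_null h (measure_singleton y))
  rw [pathEncOf_sub hB hxy, Measure.real, hvol]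
  simp

lemma pathEncOf_sub_of_forall_notMem (hB : MeasurableSet B) {x y : ℝ} (hxy : x ≤ y)
    (h : ∀ t ∈ Ioo x y, t ∉ B) : pathEncOf B y - pathEncOf B x = y - x :=
  pathEncOf_sub_of_null hB hxy <| by
    rw [show B ∩ Ioo x y = ∅ from eq_empty_of_forall_notMem fun t ht => h t ht.2 ht.1,
      measure_empty]

lemma pathEncOf_eq_self (hB : MeasurableSet B) {x : ℝ} (h : B ⊆ Ici (max x 0)) :
    pathEncOf B x = x := by
  have hgap : ∀ u v, v ≤ max x 0 → ∀ t ∈ Ioo u v, t ∉ B := fun u v hv t ht htB =>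
    (h htB).not_gt (ht.2.trans_le hv)
  rcases le_total x 0 with hx | hx
  · simpa using pathEncOf_sub_of_forall_notMem hB hx (hgap x 0 (le_max_right _ _))
  · simpa using pathEncOf_sub_of_forall_notMem hB hx (hgap 0 x (le_max_left _ _))

lemma pathEncOf_le_self (hB : MeasurableSet B) (hB0 : B ⊆ Ici 0) (x : ℝ) :
    pathEncOf B x ≤ x := by
  rcases le_total x 0 with hx | hx
  · rw [pathEncOf_eq_self hB (by rwa [max_eq_right hx])]
  · simpa using pathEncOf_sub_le hB hx

lemma bddAbove_pathEncOf_image_Iic (hB : MeasurableSet B) (hB0 : B ⊆ Ici 0) (x : ℝ) :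
    BddAbove (pathEncOf B '' Iic x) :=
  ⟨x, forall_mem_image.2 fun t ht => (pathEncOf_le_self hB hB0 t).trans ht⟩

lemma volume_biUnion_Icc_inter_eq_zero {ι : Type*} (I : Finset ι) (p q : ι → ℝ) {s : Set ℝ}
    (h : s ∩ ⋃ i ∈ I, Ioo (p i) (q i) = ∅) : volume ((⋃ i ∈ I, Icc (p i) (q i)) ∩ s) = 0 := by
  classical
  refine measure_mono_null (fun t ⟨ht, hts⟩ => ?_) ((I.image p ∪ I.image q).measure_zero volume)
  obtain ⟨i, hi, hpt, htq⟩ := mem_iUnion₂.1 ht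
  simp only [Finset.coe_union, Finset.coe_image, mem_union, mem_image, Finset.mem_coe]
  by_contra! hne
  have : t ∈ s ∩ ⋃ i ∈ I, Ioo (p i) (q i) := ⟨hts, mem_biUnion hi
    ⟨hpt.lt_of_ne (hne.1 i hi), htq.lt_of_ne (hne.2 i hi).symm⟩⟩
  rwa [h] at this

end PathEncOf

section PastMax

variable {S : ℝ → ℝ}

lemma le_pastMax {x y : ℝ} (hS : BddAbove (S '' Iic x)) (h : y ≤ x) : S y ≤ pastMax S x :=
  le_csSup hS (mem_image_of_mem S h)

lemma pastMax_le {x c : ℝ} (h : ∀ y ≤ x, S y ≤ c) : pastMax S x ≤ c :=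
  csSup_le (nonempty_Iic.image S) (forall_mem_image.2 h)

lemma pastMax_eq_self {x : ℝ} (h : ∀ y ≤ x, S y ≤ S x) : pastMax S x = S x :=
  IsGreatest.csSup_eq ⟨mem_image_of_mem S self_mem_Iic, forall_mem_image.2 h⟩

lemma pastMax_eq_of_le {u x : ℝ} (hS : BddAbove (S '' Iic x)) (hux : u ≤ x)
    (h : ∀ z ∈ Icc u x, S z ≤ pastMax S u) : pastMax S x = pastMax S u := by
  refine le_antisymm (pastMax_le fun t ht => ?_) (csSup_le_csSup hS (nonempty_Iic.image S)
    (image_mono (Iic_subset_Iic.2 hux)))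
  rcases le_total t u with htu | hut
  · exact le_pastMax (hS.mono (image_mono (Iic_subset_Iic.2 hux))) htu
  · exact h t ⟨hut, ht⟩

lemma pitman_sub (S : ℝ → ℝ) (x y : ℝ) :
    pitman S y - pitman S x = 2 * (pastMax S y - pastMax S x) - (S y - S x) := by
  unfold pitman; ring

lemma pitman_eq_self {x : ℝ} (h : ∀ t ≤ max x 0, S t = t) : pitman S x = x := by
  have hM : ∀ z ≤ max x 0, pastMax S z = z := fun z hz =>
    (pastMax_eq_self fun y hy => by rw [h y (hy.trans hz), h z hz]; exact hy).trans (h z hz)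
  rw [pitman, hM x (le_max_left _ _), hM 0 (le_max_right _ _), h x (le_max_left _ _)]
  ring

end PastMax

def descentSet (N : ℕ) (Q E : ℕ → ℝ) : Set ℝ :=
  ⋃ n ∈ Finset.Icc 1 N, Icc (bPt Q E n) (cPt N Q E n)

section Configuration

variable {N : ℕ} {Q E : ℕ → ℝ}

lemma measurableSet_ballSet : MeasurableSet (ballSet N Q E) :=
  Finset.measurableSet_biUnion _ fun _ _ => measurableSet_Icc

lemma measurableSet_descentSet : MeasurableSet (descentSet N Q E) :=
  Finset.measurableSet_biUnion _ fun _ _ => measurableSet_Icc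

@[simp]
lemma aPt_one : aPt Q E 1 = 0 := by simp [aPt]

lemma aPt_succ {n : ℕ} (hn : 1 ≤ n) : aPt Q E (n + 1) = bPt Q E n + E n := by
  obtain ⟨k, rfl⟩ := Nat.exists_eq_add_of_le' hn
  rw [bPt, aPt, aPt, Nat.add_sub_cancel, Nat.add_sub_cancel,
    Finset.sum_Icc_succ_top (Nat.le_add_left 1 k)]
  ring

lemma aPt_le_bPt (hQ : ∀ n, 1 ≤ n → n ≤ N → 0 ≤ Q n) {n : ℕ} (hn1 : 1 ≤ n) (hn : n ≤ N) :
    aPt Q E n ≤ bPt Q E n :=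
  le_add_of_nonneg_right (hQ n hn1 hn)

lemma bPt_le_aPt_succ (hE : ∀ n, 1 ≤ n → n ≤ N - 1 → 0 ≤ E n) {n : ℕ} (hn1 : 1 ≤ n)
    (hn : n < N) : bPt Q E n ≤ aPt Q E (n + 1) := by
  rw [aPt_succ hn1]
  exact le_add_of_nonneg_right (hE n hn1 (by omega))

lemma cPt_le_aPt_succ {n : ℕ} (hn : n < N) : cPt N Q E n ≤ aPt Q E (n + 1) := by
  rw [cPt, if_pos hn]
  exact min_le_right _ _

lemma cPt_le (n : ℕ) : cPt N Q E n ≤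
    bPt Q E n + pastMax (pathEnc N Q E) (bPt Q E n) - pathEnc N Q E (bPt Q E n) := by
  unfold cPt
  split_ifs
  exacts [min_le_left _ _, le_rfl]

lemma pathEnc_sub_aPt {n : ℕ} (hn1 : 1 ≤ n) (hn : n ≤ N) {x : ℝ} (hx : aPt Q E n ≤ x)
    (hxb : x ≤ bPt Q E n) : pathEnc N Q E x - pathEnc N Q E (aPt Q E n) = aPt Q E n - x :=
  pathEncOf_sub_of_subset measurableSet_ballSet hx fun _ ht =>
    mem_biUnion (Finset.mem_Icc.2 ⟨hn1, hn⟩) ⟨ht.1.le, ht.2.le.trans hxb⟩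

lemma pathEncOf_descentSet_sub_bPt {n : ℕ} (hn1 : 1 ≤ n) (hn : n ≤ N) {x : ℝ}
    (hx : bPt Q E n ≤ x) (hxc : x ≤ cPt N Q E n) :
    pathEncOf (descentSet N Q E) x - pathEncOf (descentSet N Q E) (bPt Q E n) = bPt Q E n - x :=
  pathEncOf_sub_of_subset measurableSet_descentSet hx fun _ ht =>
    mem_biUnion (Finset.mem_Icc.2 ⟨hn1, hn⟩) ⟨ht.1.le, ht.2.le.trans hxc⟩

variable (hQ : ∀ n, 1 ≤ n → n ≤ N → 0 ≤ Q n) (hE : ∀ n, 1 ≤ n → n ≤ N - 1 → 0 ≤ E n)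
include hQ hE

lemma aPt_mono {m n : ℕ} (hmn : m ≤ n) (hn : n ≤ N) : aPt Q E m ≤ aPt Q E n :=
  Finset.sum_le_sum_of_subset_of_nonneg (Finset.Icc_subset_Icc_right (by omega))
    fun k hk _ => by
      obtain ⟨hk1, hkn⟩ := Finset.mem_Icc.1 hk
      exact add_nonneg (hQ k hk1 (by omega)) (hE k hk1 (by omega))

lemma aPt_nonneg {n : ℕ} (hn : n ≤ N) : 0 ≤ aPt Q E n := by
  simpa [aPt] using aPt_mono hQ hE (Nat.zero_le n) hn

/-- The cell of `n` is `[aₙ, aₙ₊₁]`; the hypotheses `n < N → …` encode `a_{N+1} = ∞`. -/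
lemma eq_of_mem_cell {m n : ℕ} (hm : m ≤ N) (hn : n ≤ N) {t : ℝ} (hmt : aPt Q E m ≤ t)
    (htm : m < N → t ≤ aPt Q E (m + 1)) (hnt : aPt Q E n < t)
    (htn : n < N → t < aPt Q E (n + 1)) : m = n := by
  rcases lt_trichotomy m n with h | rfl | h
  · linarith [aPt_mono hQ hE (Nat.succ_le_of_lt h) hn, htm (h.trans_le hn)]
  · rfl
  · linarith [aPt_mono hQ hE (Nat.succ_le_of_lt h) hm, htn (h.trans_le hm)]

lemma mem_Icc_of_mem_biUnion_of_mem_cell {p q : ℕ → ℝ}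
    (hp : ∀ m, 1 ≤ m → m ≤ N → aPt Q E m ≤ p m) (hq : ∀ m, 1 ≤ m → m < N → q m ≤ aPt Q E (m + 1))
    {n : ℕ} (hn : n ≤ N) {t : ℝ} (ht : t ∈ ⋃ m ∈ Finset.Icc 1 N, Icc (p m) (q m))
    (hnt : aPt Q E n < t) (htn : n < N → t < aPt Q E (n + 1)) : t ∈ Icc (p n) (q n) := by
  obtain ⟨m, hm, ht⟩ := mem_iUnion₂.1 ht
  obtain ⟨hm1, hmN⟩ := Finset.mem_Icc.1 hm
  obtain rfl := eq_of_mem_cell hQ hE hmN hn ((hp m hm1 hmN).trans ht.1)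
    (fun h => ht.2.trans (hq m hm1 h)) hnt htn
  exact ht

lemma biUnion_subset_Ici {p q : ℕ → ℝ} (hp : ∀ m, 1 ≤ m → m ≤ N → aPt Q E m ≤ p m) {x : ℝ}
    (hx : 0 < N → x ≤ 0) : ⋃ m ∈ Finset.Icc 1 N, Icc (p m) (q m) ⊆ Ici (max x 0) := by
  refine iUnion₂_subset fun m hm t ht => ?_
  obtain ⟨hm1, hmN⟩ := Finset.mem_Icc.1 hm
  rw [mem_Ici, max_eq_right (hx (by omega))]
  exact (aPt_nonneg hQ hE hmN).trans ((hp m hm1 hmN).trans ht.1)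

lemma ballSet_subset_Ici {x : ℝ} (hx : 0 < N → x ≤ 0) : ballSet N Q E ⊆ Ici (max x 0) :=
  biUnion_subset_Ici hQ hE (fun _ _ _ => le_rfl) hx

lemma descentSet_subset_Ici {x : ℝ} (hx : 0 < N → x ≤ 0) : descentSet N Q E ⊆ Ici (max x 0) :=
  biUnion_subset_Ici hQ hE (fun _ => aPt_le_bPt hQ) hx

lemma bddAbove_pathEnc_image_Iic (x : ℝ) : BddAbove (pathEnc N Q E '' Iic x) :=
  bddAbove_pathEncOf_image_Iic measurableSet_ballSet
    (by simpa using ballSet_subset_Ici hQ hE (x := 0) fun _ => le_rfl) x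

lemma bPt_le_cPt {n : ℕ} (hn1 : 1 ≤ n) : bPt Q E n ≤ cPt N Q E n := by
  have := le_pastMax (bddAbove_pathEnc_image_Iic hQ hE (bPt Q E n)) le_rfl
  unfold cPt
  split_ifs with h
  exacts [le_min (by linarith) (bPt_le_aPt_succ hE hn1 h), by linarith]

lemma pathEnc_sub_bPt {n : ℕ} (hn1 : 1 ≤ n) (hn : n ≤ N) {x : ℝ} (hx : bPt Q E n ≤ x)
    (hxa : n < N → x ≤ aPt Q E (n + 1)) :
    pathEnc N Q E x - pathEnc N Q E (bPt Q E n) = x - bPt Q E n :=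
  pathEncOf_sub_of_forall_notMem measurableSet_ballSet hx fun _ ht htB =>
    ht.1.not_ge (mem_Icc_of_mem_biUnion_of_mem_cell hQ hE (fun _ _ _ => le_rfl)
      (fun _ hm1 hm => bPt_le_aPt_succ hE hm1 hm) hn htB
      ((aPt_le_bPt hQ hn1 hn).trans_lt ht.1) fun h => ht.2.trans_le (hxa h)).2

lemma pitman_pathEnc_eq_self {x : ℝ} (hx : 0 < N → x ≤ 0) : pitman (pathEnc N Q E) x = x :=
  pitman_eq_self fun _ ht => pathEncOf_eq_self measurableSet_ballSet <|
    (ballSet_subset_Ici hQ hE hx).trans (Ici_subset_Ici.2 (max_le ht (le_max_right _ _)))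

lemma pitman_pathEnc_sub_aPt {n : ℕ} (hn1 : 1 ≤ n) (hn : n ≤ N) {x : ℝ} (hx : aPt Q E n ≤ x)
    (hxb : x ≤ bPt Q E n) :
    pitman (pathEnc N Q E) x - pitman (pathEnc N Q E) (aPt Q E n) = x - aPt Q E n := by
  have hM : pastMax (pathEnc N Q E) x = pastMax (pathEnc N Q E) (aPt Q E n) :=
    pastMax_eq_of_le (bddAbove_pathEnc_image_Iic hQ hE x) hx fun z hz => by
      linarith [pathEnc_sub_aPt hn1 hn hz.1 (hz.2.trans hxb), hz.1,
        le_pastMax (bddAbove_pathEnc_image_Iic hQ hE (aPt Q E n)) le_rfl]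
  rw [pitman_sub, hM, pathEnc_sub_aPt hn1 hn hx hxb]
  ring

lemma pitman_pathEnc_sub_bPt {n : ℕ} (hn1 : 1 ≤ n) (hn : n ≤ N) {x : ℝ} (hx : bPt Q E n ≤ x)
    (hxc : x ≤ cPt N Q E n) :
    pitman (pathEnc N Q E) x - pitman (pathEnc N Q E) (bPt Q E n) = bPt Q E n - x := by
  have hS : ∀ z ∈ Icc (bPt Q E n) x,
      pathEnc N Q E z - pathEnc N Q E (bPt Q E n) = z - bPt Q E n := fun z hz =>
    pathEnc_sub_bPt hQ hE hn1 hn hz.1 fun h => hz.2.trans (hxc.trans (cPt_le_aPt_succ h))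
  have hM : pastMax (pathEnc N Q E) x = pastMax (pathEnc N Q E) (bPt Q E n) :=
    pastMax_eq_of_le (bddAbove_pathEnc_image_Iic hQ hE x) hx fun z hz => by
      linarith [hS z hz, hz.2, cPt_le (N := N) (Q := Q) (E := E) n]
  rw [pitman_sub, hM, hS x ⟨hx, le_rfl⟩]
  ring

lemma pitman_pathEnc_sub_cPt {n : ℕ} (hn1 : 1 ≤ n) (hn : n ≤ N) {x : ℝ} (hx : cPt N Q E n ≤ x)
    (hxa : n < N → x ≤ aPt Q E (n + 1)) :
    pitman (pathEnc N Q E) x - pitman (pathEnc N Q E) (cPt N Q E n) = x - cPt N Q E n := by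
  set S := pathEnc N Q E
  by_cases hc : cPt N Q E n = bPt Q E n + pastMax S (bPt Q E n) - S (bPt Q E n)
  · have hbc := bPt_le_cPt hQ hE hn1 (N := N)
    have hS : ∀ z ∈ Icc (bPt Q E n) x, S z - S (bPt Q E n) = z - bPt Q E n := fun z hz =>
      pathEnc_sub_bPt hQ hE hn1 hn hz.1 fun h => hz.2.trans (hxa h)
    have hM : ∀ z ∈ Icc (cPt N Q E n) x, pastMax S z = S z := fun z hz =>
      pastMax_eq_self fun y hyz => by
        have hSz := hS z ⟨hbc.trans hz.1, hz.2⟩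
        rcases le_total y (bPt Q E n) with hyb | hby
        · linarith [le_pastMax (bddAbove_pathEnc_image_Iic hQ hE (bPt Q E n)) hyb, hz.1]
        · linarith [hS y ⟨hby, hyz.trans hz.2⟩]
    rw [pitman_sub, hM x ⟨hx, le_rfl⟩, hM _ ⟨le_rfl, hx⟩]
    linarith [hS x ⟨hbc.trans hx, le_rfl⟩, hS _ ⟨hbc, hx⟩]
  · have hnN : n < N := by
      by_contra h
      exact hc (by rw [cPt, if_neg h])
    have hca : cPt N Q E n = aPt Q E (n + 1) := by
      rw [cPt, if_pos hnN] at hc ⊢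
      exact (min_choice _ _).resolve_left hc
    obtain rfl : x = cPt N Q E n := le_antisymm (hca ▸ hxa hnN) hx
    simp

lemma pathEncOf_descentSet_eq_self {x : ℝ} (hx : 0 < N → x ≤ 0) :
    pathEncOf (descentSet N Q E) x = x :=
  pathEncOf_eq_self measurableSet_descentSet (descentSet_subset_Ici hQ hE hx)

lemma pathEncOf_descentSet_sub_aPt {n : ℕ} (hn1 : 1 ≤ n) (hn : n ≤ N) {x : ℝ}
    (hx : aPt Q E n ≤ x) (hxb : x ≤ bPt Q E n) :
    pathEncOf (descentSet N Q E) x - pathEncOf (descentSet N Q E) (aPt Q E n) = x - aPt Q E n :=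
  pathEncOf_sub_of_forall_notMem measurableSet_descentSet hx fun _ ht htG =>
    (ht.2.trans_le hxb).not_ge (mem_Icc_of_mem_biUnion_of_mem_cell hQ hE
      (fun _ => aPt_le_bPt hQ) (fun _ _ => cPt_le_aPt_succ) hn htG ht.1
      fun h => (ht.2.trans_le hxb).trans_le (bPt_le_aPt_succ hE hn1 h)).1

lemma pathEncOf_descentSet_sub_cPt {n : ℕ} (hn1 : 1 ≤ n) (hn : n ≤ N) {x : ℝ}
    (hx : cPt N Q E n ≤ x) (hxa : n < N → x ≤ aPt Q E (n + 1)) :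
    pathEncOf (descentSet N Q E) x - pathEncOf (descentSet N Q E) (cPt N Q E n) = x - cPt N Q E n :=
  pathEncOf_sub_of_forall_notMem measurableSet_descentSet hx fun _ ht htG =>
    ht.1.not_ge (mem_Icc_of_mem_biUnion_of_mem_cell hQ hE
      (fun _ => aPt_le_bPt hQ) (fun _ _ => cPt_le_aPt_succ) hn htG
      (((aPt_le_bPt hQ hn1 hn).trans (bPt_le_cPt hQ hE hn1)).trans_lt ht.1)
      fun h => ht.2.trans_le (hxa h)).2

theorem pitman_pathEnc_eq_pathEncOf_descentSet :
    pitman (pathEnc N Q E) = pathEncOf (descentSet N Q E) := by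
  suffices h : ∀ n ≤ N, ∀ x, (n < N → x ≤ aPt Q E (n + 1)) →
      pitman (pathEnc N Q E) x = pathEncOf (descentSet N Q E) x from
    funext fun x => h N le_rfl x fun hN => absurd hN (lt_irrefl N)
  intro n
  induction n with
  | zero =>
    intro _ x hx
    have hx0 : 0 < N → x ≤ 0 := by simpa using hx
    rw [pitman_pathEnc_eq_self hQ hE hx0, pathEncOf_descentSet_eq_self hQ hE hx0]
  | succ n ih =>
    intro hn x hx
    have hn1 : 1 ≤ n + 1 := Nat.le_add_left 1 n
    have hab := aPt_le_bPt (E := E) hQ hn1 hn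
    have hbc := bPt_le_cPt hQ hE hn1 (N := N)
    have ha := ih (n.le_succ.trans hn) _ fun _ => le_rfl
    have hb : pitman (pathEnc N Q E) (bPt Q E (n + 1)) =
        pathEncOf (descentSet N Q E) (bPt Q E (n + 1)) := by
      linarith [pitman_pathEnc_sub_aPt hQ hE hn1 hn hab le_rfl,
        pathEncOf_descentSet_sub_aPt hQ hE hn1 hn hab le_rfl]
    have hc : pitman (pathEnc N Q E) (cPt N Q E (n + 1)) =
        pathEncOf (descentSet N Q E) (cPt N Q E (n + 1)) := by
      linarith [pitman_pathEnc_sub_bPt hQ hE hn1 hn hbc le_rfl,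
        pathEncOf_descentSet_sub_bPt hn1 hn hbc le_rfl]
    rcases le_total x (aPt Q E (n + 1)) with hxa | hax
    · exact ih (n.le_succ.trans hn) x fun _ => hxa
    rcases le_total x (bPt Q E (n + 1)) with hxb | hbx
    · linarith [pitman_pathEnc_sub_aPt hQ hE hn1 hn hax hxb,
        pathEncOf_descentSet_sub_aPt hQ hE hn1 hn hax hxb]
    rcases le_total x (cPt N Q E (n + 1)) with hxc | hcx
    · linarith [pitman_pathEnc_sub_bPt hQ hE hn1 hn hbx hxc,
        pathEncOf_descentSet_sub_bPt hn1 hn hbx hxc]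
    · linarith [pitman_pathEnc_sub_cPt hQ hE hn1 hn hcx hx,
        pathEncOf_descentSet_sub_cPt hQ hE hn1 hn hcx hx]

end Configuration

theorem pitman_piecewise_linear_general (N : ℕ) (Q E : ℕ → ℝ)
    (hQ : ∀ n, 1 ≤ n → n ≤ N → 0 < Q n)
    (hE : ∀ n, 1 ≤ n → n ≤ N - 1 → 0 < E n) :
    (∀ n, 1 ≤ n → n ≤ N →
      ∀ x ∈ Set.Icc (bPt Q E n) (cPt N Q E n), ∀ y ∈ Set.Icc (bPt Q E n) (cPt N Q E n),
        pitman (pathEnc N Q E) x - pitman (pathEnc N Q E) y = y - x) ∧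
    (∀ x y : ℝ, x ≤ y →
      (Set.Ioo x y ∩ ⋃ n ∈ Finset.Icc 1 N, Set.Ioo (bPt Q E n) (cPt N Q E n)) = ∅ →
      pitman (pathEnc N Q E) y - pitman (pathEnc N Q E) x = y - x) := by
  rw [pitman_pathEnc_eq_pathEncOf_descentSet (fun n h1 h2 => (hQ n h1 h2).le)
    (fun n h1 h2 => (hE n h1 h2).le)]
  refine ⟨fun n hn1 hn x hx y hy => ?_, fun x y hxy hdisj => ?_⟩
  · have hdown : ∀ u ∈ Icc (bPt Q E n) (cPt N Q E n), ∀ v ∈ Icc (bPt Q E n) (cPt N Q E n),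
        u ≤ v → pathEncOf (descentSet N Q E) v - pathEncOf (descentSet N Q E) u = u - v :=
      fun u hu v hv huv => pathEncOf_sub_of_subset measurableSet_descentSet huv fun _ ht =>
        mem_biUnion (Finset.mem_Icc.2 ⟨hn1, hn⟩) ⟨hu.1.trans ht.1.le, ht.2.le.trans hv.2⟩
    rcases le_total x y with hxy | hyx
    · linarith [hdown x hx y hy hxy]
    · linarith [hdown y hy x hx hyx]
  · exact pathEncOf_sub_of_null measurableSet_descentSet hxy
      (volume_biUnion_Icc_inter_eq_zero _ _ _ hdisj)

theorem pitman_piecewise_linear (N : ℕ) (hN : 1 ≤ N) (Q E : ℕ → ℝ)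
    (hQ : ∀ n, 1 ≤ n → n ≤ N → 0 < Q n)
    (hE : ∀ n, 1 ≤ n → n ≤ N - 1 → 0 < E n) :
    (∀ n, 1 ≤ n → n ≤ N →
      ∀ x ∈ Set.Icc (bPt Q E n) (cPt N Q E n), ∀ y ∈ Set.Icc (bPt Q E n) (cPt N Q E n),
        pitman (pathEnc N Q E) x - pitman (pathEnc N Q E) y = y - x) ∧
    (∀ x y : ℝ, x ≤ y →
      (Set.Ioo x y ∩ ⋃ n ∈ Finset.Icc 1 N, Set.Ioo (bPt Q E n) (cPt N Q E n)) = ∅ →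
      pitman (pathEnc N Q E) y - pitman (pathEnc N Q E) x = y - x) :=
  pitman_piecewise_linear_general N Q E hQ hE
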